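/- In the conjugate gradient algorithm applied to A x = b with symmetric positive definite A, the iterate x_k minimizes the A-norm error over the affine space spanned by the previous search directions: for every k ≤ K and every z ∈ x₀ + span{p₀, …, p_{k−1}}, one has ‖x − x_k‖_A ≤ ‖x − z‖_A. -/

import Mathlib

/-!
The residual `r_k = b - A x_k` is the A-image of the error `x - x_k`. By induction on `k`,
`r_k` is orthogonal to `p_0, …, p_{k-1}` and `p_k` is A-conjugate to them; the step length `γ`
is chosen exactly to kill `r_{k+1} ⬝ p_k`, and `β` to kill `p_{k+1} ⬝ A p_k`. Hence the error
`x - x_k` is A-orthogonal to `x_k - z ∈ span {p_0, …, p_{k-1}}`, and Pythagoras in the A-inner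
product gives the minimality.
-/

open Matrix

variable {ι : Type*} [Fintype ι]

lemma Matrix.IsSymm.dotProduct_mulVec_comm {A : Matrix ι ι ℝ} (hA : A.IsSymm) (u v : ι → ℝ) :
    u ⬝ᵥ (A *ᵥ v) = v ⬝ᵥ (A *ᵥ u) := by
  simpa [hA.eq] using dotProduct_transpose_mulVec A u v

lemma Matrix.PosDef.dotProduct_mulVec_pos' {A : Matrix ι ι ℝ} (hA : A.PosDef) {v : ι → ℝ}
    (hv : v ≠ 0) : 0 < v ⬝ᵥ (A *ᵥ v) := by
  simpa using hA.dotProduct_mulVec_pos hv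

lemma Matrix.PosSemidef.dotProduct_mulVec_le_add {A : Matrix ι ι ℝ} (hA : A.PosSemidef)
    {e w : ι → ℝ} (hew : w ⬝ᵥ (A *ᵥ e) = 0) :
    e ⬝ᵥ (A *ᵥ e) ≤ (e + w) ⬝ᵥ (A *ᵥ (e + w)) := by
  have hsymm : A.IsSymm := by simpa using hA.isHermitian
  have hwe : e ⬝ᵥ (A *ᵥ w) = 0 := by rw [hsymm.dotProduct_mulVec_comm, hew]
  have hww : 0 ≤ w ⬝ᵥ (A *ᵥ w) := by simpa using hA.dotProduct_mulVec_nonneg w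
  simp only [mulVec_add, dotProduct_add, add_dotProduct, hew, hwe]
  linarith

lemma dotProduct_eq_zero_of_mem_span {s : Set (ι → ℝ)} {v w : ι → ℝ}
    (h : ∀ u ∈ s, u ⬝ᵥ v = 0) (hw : w ∈ Submodule.span ℝ s) : w ⬝ᵥ v = 0 := by
  induction hw using Submodule.span_induction with
  | mem u hu => exact h u hu
  | zero => simp
  | add u u' _ _ hu hu' => rw [add_dotProduct, hu, hu', add_zero]
  | smul c u _ hu => rw [smul_dotProduct, hu, smul_zero]

/-- The CG step length `γ`. -/
noncomputable def cgStepSize (A : Matrix ι ι ℝ) (r p : ι → ℝ) : ℝ :=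
  (r ⬝ᵥ r) / (p ⬝ᵥ (A *ᵥ p))

lemma cgStepSize_ne_zero {A : Matrix ι ι ℝ} (hA : A.PosDef) {r p : ι → ℝ} (hr : r ≠ 0)
    (hp : p ≠ 0) : cgStepSize A r p ≠ 0 :=
  div_ne_zero (mt dotProduct_self_eq_zero.mp hr) (hA.dotProduct_mulVec_pos' hp).ne'

structure IsCGSequence (A : Matrix ι ι ℝ) (b : ι → ℝ) (xs rs ps : ℕ → ι → ℝ) : Prop where
  rs_zero : rs 0 = b - A *ᵥ xs 0
  ps_zero : ps 0 = rs 0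
  xs_succ (k : ℕ) : xs (k + 1) = xs k + cgStepSize A (rs k) (ps k) • ps k
  rs_succ (k : ℕ) : rs (k + 1) = rs k - cgStepSize A (rs k) (ps k) • (A *ᵥ ps k)
  ps_succ (k : ℕ) :
    ps (k + 1) = rs (k + 1) + ((rs (k + 1) ⬝ᵥ rs (k + 1)) / (rs k ⬝ᵥ rs k)) • ps k

namespace IsCGSequence

variable {A : Matrix ι ι ℝ} {b : ι → ℝ} {xs rs ps : ℕ → ι → ℝ} (h : IsCGSequence A b xs rs ps)
include h

lemma rs_eq (k : ℕ) : rs k = b - A *ᵥ xs k := by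
  induction k with
  | zero => exact h.rs_zero
  | succ k ih =>
    rw [h.rs_succ, h.xs_succ, ih, mulVec_add, mulVec_smul]
    module

lemma mulVec_sub_xs {x : ι → ℝ} (hx : A *ᵥ x = b) (k : ℕ) : A *ᵥ (x - xs k) = rs k := by
  rw [mulVec_sub, hx, h.rs_eq]

lemma xs_sub_xs_zero_mem_span (k : ℕ) :
    xs k - xs 0 ∈ Submodule.span ℝ (Set.range fun i : Fin k => ps i) := by
  induction k with
  | zero => simp
  | succ k ih =>
    have hmono : Submodule.span ℝ (Set.range fun i : Fin k => ps i) ≤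
        Submodule.span ℝ (Set.range fun i : Fin (k + 1) => ps i) :=
      Submodule.span_mono <| Set.range_subset_iff.mpr fun i => ⟨i.castSucc, rfl⟩
    rw [h.xs_succ, add_sub_right_comm]
    exact Submodule.add_mem _ (hmono ih)
      (Submodule.smul_mem _ _ (Submodule.subset_span ⟨Fin.last k, rfl⟩))

lemma dotProduct_rs_eq_dotProduct_ps {v : ι → ℝ} {j : ℕ} (hv : ∀ i < j, v ⬝ᵥ ps i = 0) :
    v ⬝ᵥ rs j = v ⬝ᵥ ps j := by
  cases j with
  | zero => rw [h.ps_zero]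
  | succ m => rw [h.ps_succ, dotProduct_add, dotProduct_smul, hv m m.lt_succ_self, smul_zero,
      add_zero]

lemma rs_dotProduct_rs_eq_zero {k : ℕ} (horth : ∀ j < k, rs k ⬝ᵥ ps j = 0) :
    ∀ j < k, rs k ⬝ᵥ rs j = 0 := fun j hj => by
  rw [h.dotProduct_rs_eq_dotProduct_ps fun i hi => horth i (hi.trans hj), horth j hj]

lemma mulVec_ps_eq {j : ℕ} (hγ : cgStepSize A (rs j) (ps j) ≠ 0) :
    A *ᵥ ps j = (cgStepSize A (rs j) (ps j))⁻¹ • (rs j - rs (j + 1)) := by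
  rw [h.rs_succ, sub_sub_cancel, smul_smul, inv_mul_cancel₀ hγ, one_smul]

lemma rs_succ_dotProduct_ps_eq_zero (hA : A.IsSymm) {k : ℕ}
    (hpAp : ps k ⬝ᵥ (A *ᵥ ps k) ≠ 0) (horth : ∀ j < k, rs k ⬝ᵥ ps j = 0)
    (hconj : ∀ j < k, ps k ⬝ᵥ (A *ᵥ ps j) = 0) :
    ∀ j < k + 1, rs (k + 1) ⬝ᵥ ps j = 0 := by
  intro j hj
  rw [h.rs_succ, sub_dotProduct, smul_dotProduct, dotProduct_comm (A *ᵥ ps k),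
    hA.dotProduct_mulVec_comm, smul_eq_mul]
  rcases Nat.lt_succ_iff_lt_or_eq.mp hj with hj | rfl
  · rw [horth j hj, hconj j hj, mul_zero, sub_zero]
  · rw [← h.dotProduct_rs_eq_dotProduct_ps horth, cgStepSize,
      div_mul_cancel₀ _ hpAp, sub_self]

lemma ps_succ_dotProduct_mulVec_ps_eq_zero {k : ℕ}
    (hγ : ∀ j ≤ k, cgStepSize A (rs j) (ps j) ≠ 0)
    (horth : ∀ j < k + 1, rs (k + 1) ⬝ᵥ ps j = 0) (hconj : ∀ j < k, ps k ⬝ᵥ (A *ᵥ ps j) = 0) :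
    ∀ j < k + 1, ps (k + 1) ⬝ᵥ (A *ᵥ ps j) = 0 := by
  have hrr := h.rs_dotProduct_rs_eq_zero horth
  intro j hj
  have hrAp : rs (k + 1) ⬝ᵥ (A *ᵥ ps j) =
      (cgStepSize A (rs j) (ps j))⁻¹ * -(rs (k + 1) ⬝ᵥ rs (j + 1)) := by
    rw [h.mulVec_ps_eq (hγ j (by omega)), dotProduct_smul, dotProduct_sub, hrr j hj, zero_sub,
      smul_eq_mul]
  rw [h.ps_succ, add_dotProduct, smul_dotProduct, hrAp, smul_eq_mul]
  rcases Nat.lt_succ_iff_lt_or_eq.mp hj with hj | rfl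
  · rw [hrr (j + 1) (by omega), hconj j hj, neg_zero, mul_zero, mul_zero, add_zero]
  · rw [cgStepSize, inv_div]
    ring

lemma rs_orthogonal_and_ps_conjugate (hA : A.PosDef) {k : ℕ} (hr : ∀ j < k, rs j ≠ 0)
    (hp : ∀ j < k, ps j ≠ 0) :
    (∀ j < k, rs k ⬝ᵥ ps j = 0) ∧ (∀ j < k, ps k ⬝ᵥ (A *ᵥ ps j) = 0) := by
  induction k with
  | zero => simp
  | succ k ih =>
    obtain ⟨horth, hconj⟩ := ih (fun j hj => hr j (by omega)) fun j hj => hp j (by omega)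
    have hsymm : A.IsSymm := by simpa using hA.isHermitian
    have horth' := h.rs_succ_dotProduct_ps_eq_zero hsymm
      (hA.dotProduct_mulVec_pos' (hp k k.lt_succ_self)).ne' horth hconj
    refine ⟨horth', h.ps_succ_dotProduct_mulVec_ps_eq_zero (fun j hj => ?_) horth' hconj⟩
    exact cgStepSize_ne_zero hA (hr j (by omega)) (hp j (by omega))

end IsCGSequence

/-- In CG, the iterate x_k minimizes the A-norm error over the affine space
x₀ + span{p₀, …, p_{k-1}}. -/
theorem cg_iterate_minimizes_A_norm
    (n : ℕ) (A : Matrix (Fin n) (Fin n) ℝ) (hA : A.PosDef)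
    (b x : Fin n → ℝ) (hx : A *ᵥ x = b)
    (xs rs ps : ℕ → Fin n → ℝ) (K : ℕ)
    (hr0 : rs 0 = b - A *ᵥ xs 0) (hp0 : ps 0 = rs 0)
    (hxs : ∀ k : ℕ, xs (k + 1) =
      xs k + ((rs k ⬝ᵥ rs k) / (ps k ⬝ᵥ (A *ᵥ ps k))) • ps k)
    (hrs : ∀ k : ℕ, rs (k + 1) =
      rs k - ((rs k ⬝ᵥ rs k) / (ps k ⬝ᵥ (A *ᵥ ps k))) • (A *ᵥ ps k))
    (hps : ∀ k : ℕ, ps (k + 1) =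
      rs (k + 1) + ((rs (k + 1) ⬝ᵥ rs (k + 1)) / (rs k ⬝ᵥ rs k)) • ps k)
    (hbd : ∀ j ≤ K, rs j ≠ 0 ∧ ps j ≠ 0) :
    ∀ k ≤ K, ∀ z : Fin n → ℝ,
      z - xs 0 ∈ Submodule.span ℝ (Set.range fun i : Fin k => ps i.val) →
      Real.sqrt ((x - xs k) ⬝ᵥ (A *ᵥ (x - xs k))) ≤
        Real.sqrt ((x - z) ⬝ᵥ (A *ᵥ (x - z))) := by
  intro k hk z hz
  have hcg : IsCGSequence A b xs rs ps := ⟨hr0, hp0, hxs, hrs, hps⟩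
  have horth : ∀ j < k, rs k ⬝ᵥ ps j = 0 :=
    (hcg.rs_orthogonal_and_ps_conjugate hA (fun j hj => (hbd j (by omega)).1)
      fun j hj => (hbd j (by omega)).2).1
  have hmem : xs k - z ∈ Submodule.span ℝ (Set.range fun i : Fin k => ps i.val) := by
    simpa using Submodule.sub_mem _ (hcg.xs_sub_xs_zero_mem_span k) hz
  have herr : (xs k - z) ⬝ᵥ (A *ᵥ (x - xs k)) = 0 := by
    rw [hcg.mulVec_sub_xs hx]
    refine dotProduct_eq_zero_of_mem_span ?_ hmem
    rintro _ ⟨i, rfl⟩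
    rw [dotProduct_comm]
    exact horth i i.isLt
  apply Real.sqrt_le_sqrt
  simpa using hA.posSemidef.dotProduct_mulVec_le_add herr
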